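/- arXiv:2404.07630 — 3 statements merged into one kernel-verified Lean document; each statement's English description precedes it below -/
import Mathlib

section
/- Let g : ℝ → ℝ be a continuous, everywhere positive probability density with CDF G(x) = ∫_{−∞}^{x} g(t) dt, ∫_ℝ g = 1, mean μ₀ = ∫_ℝ x·g(x) dx, and μ₀ > 0. Let q ∈ (0,1) and 0 < r < r₀, and set s := r₀μ₀/r. For β ∈ (0,1) define x̄_β(u) = 2s/(1+q) − ((1−q)/(1+q))·u, let x̲(β) be the unique zero in (μ₀, s) of Q_β(u) = β·∫_{u}^{x̄_β(u)} (G(x) − G(x̄_β(u))) dx − (1−β)·(μ₀ − u), and let x̄(β) = x̄_β(x̲(β)). Then for all β₁ < β₂ in (0,1): x̲(β₁) < x̲(β₂) and x̄(β₁) > x̄(β₂). -/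
open MeasureTheory Set

/-!
Write `I(u) = ∫_u^{x̄(u)} (G x - G(x̄(u))) dx`, so that `Q β u = β I(u) - (1 - β)(μ₀ - u)`.
Since `G` is increasing and `x̄` is decreasing, raising `u` shrinks the interval `[u, x̄(u)]` and
lowers `G(x̄(u))`, so `I` and hence `Q β` are increasing in `u`. At a zero `u > μ₀` of `Q β₁`,
raising the weight to `β₂ > β₁` makes `Q β₂ u` negative, so the zero of `Q β₂` lies further
right; `x̄` then moves the other way.
-/

lemma monotone_setIntegral_Iic {g : ℝ → ℝ} (hg : Integrable g) (hg_nonneg : ∀ x, 0 ≤ g x) :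
    Monotone fun x => ∫ t in Iic x, g t := fun _ _ hxy =>
  setIntegral_mono_set hg.integrableOn (.of_forall hg_nonneg) (Iic_subset_Iic.mpr hxy).eventuallyLE

lemma Monotone.intervalIntegral_sub_right_le {G : ℝ → ℝ} (hG : Monotone G) {a b b' a' : ℝ}
    (hab : a ≤ b) (hbb' : b ≤ b') (hb'a' : b' ≤ a') :
    ∫ x in a..a', (G x - G a') ≤ ∫ x in b..b', (G x - G b') := by
  have hint : ∀ c d, IntervalIntegrable (fun x => G x - G a') volume c d := fun c d =>
    ((hG.monotoneOn _).intervalIntegrable).sub intervalIntegrable_const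
  have hshrink : ∫ x in b..b', -(G x - G a') ≤ ∫ x in a..a', -(G x - G a') := by
    refine intervalIntegral.integral_mono_interval hab hbb' hb'a' ?_ (hint a a').neg
    refine (ae_restrict_iff' measurableSet_Ioc).mpr (.of_forall fun x hx => ?_)
    simpa using hG hx.2
  rw [intervalIntegral.integral_neg, intervalIntegral.integral_neg, neg_le_neg_iff] at hshrink
  refine hshrink.trans (intervalIntegral.integral_mono_on hbb' (hint b b') ?_ fun x _ => ?_)
  · exact ((hG.monotoneOn _).intervalIntegrable).sub intervalIntegrable_const
  · linarith [hG hb'a']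

lemma lt_of_weighted_zero {I : ℝ → ℝ} {μ₀ β₁ β₂ u₁ u₂ : ℝ} (hβ₁ : 0 < β₁) (hβ₂ : β₂ < 1)
    (hββ : β₁ < β₂) (hu₁ : μ₀ < u₁) (hI : u₂ ≤ u₁ → I u₂ ≤ I u₁)
    (hz₁ : β₁ * I u₁ - (1 - β₁) * (μ₀ - u₁) = 0) (hz₂ : β₂ * I u₂ - (1 - β₂) * (μ₀ - u₂) = 0) :
    u₁ < u₂ := by
  by_contra! hle
  have hneg : β₂ * I u₁ - (1 - β₂) * (μ₀ - u₁) < 0 := by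
    have key : β₁ * (β₂ * I u₁ - (1 - β₂) * (μ₀ - u₁))
        = (β₂ - β₁) * (μ₀ - u₁) + β₂ * (β₁ * I u₁ - (1 - β₁) * (μ₀ - u₁)) := by ring
    rw [hz₁, mul_zero, add_zero] at key
    nlinarith [mul_pos (sub_pos.mpr hββ) (sub_pos.mpr hu₁)]
  nlinarith [mul_le_mul_of_nonneg_left (hI hle) (hβ₁.trans hββ).le,
    mul_nonneg (sub_nonneg.mpr hβ₂.le) (sub_nonneg.mpr hle)]

theorem stmt_10_general (g : ℝ → ℝ) (hg_pos : ∀ x, 0 < g x)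
    (hg_one : (∫ x, g x) = 1)
    (μ₀ : ℝ)
    (G : ℝ → ℝ) (hG : ∀ x, G x = ∫ t in Iic x, g t)
    (q : ℝ) (hq : q ∈ Set.Ioo (0 : ℝ) 1)
    (s : ℝ)
    (xbar : ℝ → ℝ) (hxbar : ∀ u, xbar u = 2 * s / (1 + q) - ((1 - q) / (1 + q)) * u)
    (Q : ℝ → ℝ → ℝ)
    (hQ : ∀ β u, Q β u
      = β * (∫ x in u..(xbar u), (G x - G (xbar u))) - (1 - β) * (μ₀ - u))
    (β₁ β₂ : ℝ) (hβ₁ : β₁ ∈ Set.Ioo (0 : ℝ) 1) (hβ₂ : β₂ ∈ Set.Ioo (0 : ℝ) 1)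
    (hββ : β₁ < β₂)
    (xl₁ xl₂ : ℝ) (hxl₁ : xl₁ ∈ Set.Ioo μ₀ s)
    (hz₁ : Q β₁ xl₁ = 0) (hz₂ : Q β₂ xl₂ = 0) :
    xl₁ < xl₂ ∧ xbar xl₂ < xbar xl₁ := by
  obtain ⟨hq0, hq1⟩ := hq
  have hg_int : Integrable g := by
    by_contra h
    simp [integral_undef h] at hg_one
  have hG_mono : Monotone G := by
    simpa only [← funext hG] using monotone_setIntegral_Iic hg_int fun x => (hg_pos x).le
  have hxbar_anti : StrictAnti xbar := fun u v huv => by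
    have hslope : 0 < (1 - q) / (1 + q) := by apply div_pos <;> linarith
    rw [hxbar, hxbar]
    gcongr
  have hxbar_ge : xl₁ ≤ xbar xl₁ := by
    have : xbar xl₁ - xl₁ = 2 * (s - xl₁) / (1 + q) := by
      rw [hxbar]; field_simp; ring
    have : 0 < 2 * (s - xl₁) / (1 + q) := by apply div_pos <;> linarith [hxl₁.2]
    linarith
  rw [hQ] at hz₁ hz₂
  have hlt : xl₁ < xl₂ :=
    lt_of_weighted_zero (I := fun u => ∫ x in u..(xbar u), (G x - G (xbar u)))
      hβ₁.1 hβ₂.2 hββ hxl₁.1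
      (fun hle => hG_mono.intervalIntegral_sub_right_le hle hxbar_ge (hxbar_anti.antitone hle))
      hz₁ hz₂
  exact ⟨hlt, hxbar_anti hlt⟩

/-- Part 1 of Proposition 4 (case `r < r₀`): the equilibrium disclosure thresholds satisfy
`∂x̲/∂β > 0` and `∂x̄/∂β < 0`, i.e. the withholding interval shrinks as the investor's
competence `β` grows. -/
theorem stmt_10 (g : ℝ → ℝ) (hg_cont : Continuous g) (hg_pos : ∀ x, 0 < g x)
    (hg_one : (∫ x, g x) = 1)
    (hxg_int : Integrable (fun x => x * g x))
    (μ₀ : ℝ) (hμ₀ : μ₀ = ∫ x, x * g x) (hμ₀pos : 0 < μ₀)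
    (G : ℝ → ℝ) (hG : ∀ x, G x = ∫ t in Iic x, g t)
    (q : ℝ) (hq : q ∈ Set.Ioo (0 : ℝ) 1)
    (r r₀ : ℝ) (hr : 0 < r) (hrr₀ : r < r₀)
    (s : ℝ) (hs : s = r₀ * μ₀ / r)
    (xbar : ℝ → ℝ) (hxbar : ∀ u, xbar u = 2 * s / (1 + q) - ((1 - q) / (1 + q)) * u)
    (Q : ℝ → ℝ → ℝ)
    (hQ : ∀ β u, Q β u
      = β * (∫ x in u..(xbar u), (G x - G (xbar u))) - (1 - β) * (μ₀ - u))
    (β₁ β₂ : ℝ) (hβ₁ : β₁ ∈ Set.Ioo (0 : ℝ) 1) (hβ₂ : β₂ ∈ Set.Ioo (0 : ℝ) 1)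
    (hββ : β₁ < β₂)
    (xl₁ xl₂ : ℝ) (hxl₁ : xl₁ ∈ Set.Ioo μ₀ s) (hxl₂ : xl₂ ∈ Set.Ioo μ₀ s)
    (hz₁ : Q β₁ xl₁ = 0) (hz₂ : Q β₂ xl₂ = 0) :
    xl₁ < xl₂ ∧ xbar xl₂ < xbar xl₁ :=
  stmt_10_general g hg_pos hg_one μ₀ G hG q hq s xbar hxbar Q hQ β₁ β₂ hβ₁ hβ₂ hββ xl₁ xl₂ hxl₁ hz₁
    hz₂
end

section
/- Let g : ℝ → ℝ be a continuous, everywhere positive probability density with CDF G(x) = ∫_{−∞}^{x} g(t) dt, ∫_ℝ g = 1, mean μ₀ = ∫_ℝ x·g(x) dx, and μ₀ > 0. Let β ∈ (0,1) and r > r₀ > 0, and set s := r₀μ₀/r. For q ∈ (0,1) define x̲_q(v) = 2s/(1+q) − ((1−q)/(1+q))·v, let x̄(q) be the unique zero in (s, μ₀) of R_q(v) = β·∫_{x̲_q(v)}^{v} (G(x) − G(x̲_q(v))) dx − (1−β)·(μ₀ − v), and let x̲(q) = x̲_q(x̄(q)). Then for all q₁ < q₂ in (0,1): x̄(q₂)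 > x̄(q₁) and x̲(q₂) > x̲(q₁). -/
/-!
Write `H(a, v) = ∫ x in a..v, (G x - G a)`, so that the threshold `x̄(q)` is the zero of
`β H(x̲_q(v), v) - (1 - β)(μ₀ - v)`. For a monotone CDF `G` this function decreases in the lower
endpoint `a` (strictly, as `g > 0`) and increases strictly in `v`. Raising `q` raises `x̲_q(v)`,
so at the old threshold the function becomes negative and the zero must move up. If `x̲` did not
move up as well, the new pair `(x̲, x̄)` would have a lower `a` and a strictly higher `v` than the
old one, so the function would be strictly larger at the new threshold than at the old one,
although it vanishes at both.
-/

open MeasureTheory Set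

noncomputable section

def gapIntegral (G : ℝ → ℝ) (a v : ℝ) : ℝ := ∫ x in a..v, (G x - G a)

def thresholdResidual (G : ℝ → ℝ) (β μ₀ a v : ℝ) : ℝ :=
  β * gapIntegral G a v - (1 - β) * (μ₀ - v)

def lowerThreshold (s q v : ℝ) : ℝ := 2 * s / (1 + q) - ((1 - q) / (1 + q)) * v

end

section GapIntegral

variable {G : ℝ → ℝ}

lemma mul_le_intervalIntegral_of_monotone (hG : Monotone G) {c a b : ℝ} (hab : a ≤ b)
    (hca : c ≤ a) : (b - a) * G c ≤ ∫ x in a..b, G x := by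
  have h := intervalIntegral.integral_mono_on (f := fun _ => G c) (μ := volume) hab
    intervalIntegrable_const hG.intervalIntegrable fun x hx => hG (hca.trans hx.1)
  simpa [intervalIntegral.integral_const, smul_eq_mul] using h

lemma gapIntegral_eq_integral_sub (hG : Monotone G) (a v : ℝ) :
    gapIntegral G a v = (∫ x in a..v, G x) - (v - a) * G a := by
  rw [gapIntegral,
    intervalIntegral.integral_sub hG.intervalIntegrable (intervalIntegrable_const (μ := volume)),
    intervalIntegral.integral_const, smul_eq_mul]

lemma gapIntegral_add_mul_le (hG : Monotone G) {a' a v v' : ℝ} (h₁ : a' ≤ a) (h₂ : a ≤ v)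
    (h₃ : v ≤ v') : gapIntegral G a v + (G a - G a') * (v' - a) ≤ gapIntegral G a' v' := by
  have hGi : ∀ p q, IntervalIntegrable G volume p q := fun _ _ => hG.intervalIntegrable
  have split₁ := intervalIntegral.integral_add_adjacent_intervals (hGi a' a) (hGi a v')
  have split₂ := intervalIntegral.integral_add_adjacent_intervals (hGi a v) (hGi v v')
  have bound₁ := mul_le_intervalIntegral_of_monotone hG h₁ le_rfl
  have bound₂ := mul_le_intervalIntegral_of_monotone hG h₃ h₂
  rw [gapIntegral_eq_integral_sub hG, gapIntegral_eq_integral_sub hG]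
  nlinarith

lemma gapIntegral_mono (hG : Monotone G) {a' a v v' : ℝ} (h₁ : a' ≤ a) (h₂ : a ≤ v)
    (h₃ : v ≤ v') : gapIntegral G a v ≤ gapIntegral G a' v' := by
  have := gapIntegral_add_mul_le hG h₁ h₂ h₃
  nlinarith [hG h₁]

lemma gapIntegral_lt_of_lt_left (hG : StrictMono G) {a' a v : ℝ} (h₁ : a' < a) (h₂ : a < v) :
    gapIntegral G a v < gapIntegral G a' v := by
  have := gapIntegral_add_mul_le hG.monotone h₁.le h₂.le le_rfl
  nlinarith [hG h₁]

end GapIntegral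

section ThresholdResidual

variable {G : ℝ → ℝ} {β μ₀ a' a v v' : ℝ}

lemma thresholdResidual_mono (hG : Monotone G) (hβ₀ : 0 ≤ β) (hβ₁ : β ≤ 1) (h₁ : a' ≤ a)
    (h₂ : a ≤ v) (h₃ : v ≤ v') :
    thresholdResidual G β μ₀ a v ≤ thresholdResidual G β μ₀ a' v' := by
  unfold thresholdResidual
  have := gapIntegral_mono hG h₁ h₂ h₃
  nlinarith

lemma thresholdResidual_lt_of_lt_left (hG : StrictMono G) (hβ₀ : 0 < β) (h₁ : a' < a)
    (h₂ : a < v) : thresholdResidual G β μ₀ a v < thresholdResidual G β μ₀ a' v := by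
  unfold thresholdResidual
  gcongr
  exact gapIntegral_lt_of_lt_left hG h₁ h₂

lemma thresholdResidual_lt_of_lt_right (hG : Monotone G) (hβ₀ : 0 ≤ β) (hβ₁ : β < 1)
    (h₁ : a' ≤ a) (h₂ : a ≤ v) (h₃ : v < v') :
    thresholdResidual G β μ₀ a v < thresholdResidual G β μ₀ a' v' := by
  unfold thresholdResidual
  have := gapIntegral_mono hG h₁ h₂ h₃.le
  nlinarith

end ThresholdResidual

lemma strictMono_integral_Iic {g : ℝ → ℝ} (hg : Integrable g) (hg_pos : ∀ x, 0 < g x) :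
    StrictMono fun x => ∫ t in Iic x, g t := by
  intro a b hab
  have := intervalIntegral.integral_Iic_sub_Iic (a := a) (b := b) hg.integrableOn hg.integrableOn
  have := intervalIntegral.intervalIntegral_pos_of_pos hg.intervalIntegrable hg_pos hab
  dsimp only
  linarith

section LowerThreshold

variable {s q v : ℝ}

lemma lowerThreshold_eq (hq : -1 < q) : lowerThreshold s q v = v - 2 * (v - s) / (1 + q) := by
  have : 1 + q ≠ 0 := by linarith
  rw [lowerThreshold]
  field_simp
  ring

lemma lowerThreshold_lt_self (hq : -1 < q) (hsv : s < v) : lowerThreshold s q v < v := by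
  rw [lowerThreshold_eq hq]
  have : 0 < 2 * (v - s) / (1 + q) := by apply div_pos <;> linarith
  linarith

lemma lowerThreshold_lt_of_lt {q₁ q₂ : ℝ} (hq₁ : -1 < q₁) (hqq : q₁ < q₂) (hsv : s < v) :
    lowerThreshold s q₁ v < lowerThreshold s q₂ v := by
  rw [lowerThreshold_eq hq₁, lowerThreshold_eq (hq₁.trans hqq)]
  have : 2 * (v - s) / (1 + q₂) < 2 * (v - s) / (1 + q₁) :=
    div_lt_div_of_pos_left (by linarith) (by linarith) (by linarith)
  linarith

lemma lowerThreshold_antitone (hq : -1 < q) (hq' : q ≤ 1) : Antitone (lowerThreshold s q) := by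
  intro v w hvw
  unfold lowerThreshold
  have : 0 ≤ (1 - q) / (1 + q) := div_nonneg (by linarith) (by linarith)
  gcongr

end LowerThreshold

theorem stmt_13_general (g : ℝ → ℝ) (hg_pos : ∀ x, 0 < g x)
    (hg_one : (∫ x, g x) = 1)
    (μ₀ : ℝ)
    (G : ℝ → ℝ) (hG : ∀ x, G x = ∫ t in Iic x, g t)
    (β : ℝ) (hβ : β ∈ Set.Ioo (0 : ℝ) 1)
    (s : ℝ)
    (xlow : ℝ → ℝ → ℝ)
    (hxlow : ∀ q v, xlow q v = 2 * s / (1 + q) - ((1 - q) / (1 + q)) * v)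
    (R : ℝ → ℝ → ℝ)
    (hR : ∀ q v, R q v
      = β * (∫ x in (xlow q v)..v, (G x - G (xlow q v))) - (1 - β) * (μ₀ - v))
    (q₁ q₂ : ℝ) (hq₁ : q₁ ∈ Set.Ioo (0 : ℝ) 1) (hq₂ : q₂ ∈ Set.Ioo (0 : ℝ) 1)
    (hqq : q₁ < q₂)
    (xu₁ xu₂ : ℝ) (hxu₁ : xu₁ ∈ Set.Ioo s μ₀) (hxu₂ : xu₂ ∈ Set.Ioo s μ₀)
    (hz₁ : R q₁ xu₁ = 0) (hz₂ : R q₂ xu₂ = 0) :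
    xu₁ < xu₂ ∧ xlow q₁ xu₁ < xlow q₂ xu₂ := by
  obtain rfl : xlow = lowerThreshold s := funext₂ hxlow
  obtain rfl : R = fun q v => thresholdResidual G β μ₀ (lowerThreshold s q v) v := funext₂ hR
  beta_reduce at hz₁ hz₂
  have hGmono : StrictMono G :=
    funext hG ▸ strictMono_integral_Iic (.of_integral_ne_zero (by simp [hg_one])) hg_pos
  have hq₁' : -1 < q₁ := by linarith [hq₁.1]
  have hq₂' : -1 < q₂ := by linarith [hq₂.1]
  have below_old : thresholdResidual G β μ₀ (lowerThreshold s q₂ xu₁) xu₁ < 0 :=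
    hz₁ ▸ thresholdResidual_lt_of_lt_left hGmono hβ.1
      (lowerThreshold_lt_of_lt hq₁' hqq hxu₁.1) (lowerThreshold_lt_self hq₂' hxu₁.1)
  have upper_lt : xu₁ < xu₂ := by
    by_contra! h
    exact (hz₂ ▸ below_old).not_ge (thresholdResidual_mono hGmono.monotone hβ.1.le hβ.2.le
      (lowerThreshold_antitone hq₂' hq₂.2.le h) (lowerThreshold_lt_self hq₂' hxu₂.1).le h)
  refine ⟨upper_lt, ?_⟩
  by_contra! h
  exact (thresholdResidual_lt_of_lt_right hGmono.monotone hβ.1.le hβ.2 h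
    (lowerThreshold_lt_self hq₁' hxu₁.1).le upper_lt).ne (hz₁.trans hz₂.symm)

/-- Part 2(b) of Proposition 4 (case `r > r₀`): both equilibrium disclosure thresholds
increase in the firm's information environment `q`, i.e. `∂x̄/∂q > 0` and `∂x̲/∂q > 0`. -/
theorem stmt_13 (g : ℝ → ℝ) (hg_cont : Continuous g) (hg_pos : ∀ x, 0 < g x)
    (hg_one : (∫ x, g x) = 1)
    (hxg_int : Integrable (fun x => x * g x))
    (μ₀ : ℝ) (hμ₀ : μ₀ = ∫ x, x * g x) (hμ₀pos : 0 < μ₀)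
    (G : ℝ → ℝ) (hG : ∀ x, G x = ∫ t in Iic x, g t)
    (β : ℝ) (hβ : β ∈ Set.Ioo (0 : ℝ) 1)
    (r r₀ : ℝ) (hr₀ : 0 < r₀) (hrr₀ : r₀ < r)
    (s : ℝ) (hs : s = r₀ * μ₀ / r)
    (xlow : ℝ → ℝ → ℝ)
    (hxlow : ∀ q v, xlow q v = 2 * s / (1 + q) - ((1 - q) / (1 + q)) * v)
    (R : ℝ → ℝ → ℝ)
    (hR : ∀ q v, R q v
      = β * (∫ x in (xlow q v)..v, (G x - G (xlow q v))) - (1 - β) * (μ₀ - v))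
    (q₁ q₂ : ℝ) (hq₁ : q₁ ∈ Set.Ioo (0 : ℝ) 1) (hq₂ : q₂ ∈ Set.Ioo (0 : ℝ) 1)
    (hqq : q₁ < q₂)
    (xu₁ xu₂ : ℝ) (hxu₁ : xu₁ ∈ Set.Ioo s μ₀) (hxu₂ : xu₂ ∈ Set.Ioo s μ₀)
    (hz₁ : R q₁ xu₁ = 0) (hz₂ : R q₂ xu₂ = 0) :
    xu₁ < xu₂ ∧ xlow q₁ xu₁ < xlow q₂ xu₂ :=
  stmt_13_general g hg_pos hg_one μ₀ G hG β hβ s xlow hxlow R hR q₁ q₂ hq₁ hq₂ hqq xu₁ xu₂ hxu₁ hxu₂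
    hz₁ hz₂
end

section
/- Let g : ℝ → ℝ be a continuous, everywhere positive probability density with CDF G(x) = ∫_{−∞}^{x} g(t) dt, ∫_ℝ g = 1, mean μ₀ = ∫_ℝ x·g(x) dx, and μ₀ > 0. Let p ∈ (0,1) and s ∈ ℝ with (p/(1−p))·∫_{−∞}^{s} G(x) dx + s − μ₀ > 0. For β ∈ (0,1) define x̄_{p,β}(u) = (2s − (1−p)·u)/(1+p), let x̲_p(β) be the unique zero in (−∞, s) of H_β(u) = (β/(1−β))·∫_{u}^{x̄_{p,β}(u)} (G(x) − G(x̄_{p,β}(u))) dx + (p/(1−p))·∫_{−∞}^{u} G(x) dx − (μ₀ − u), and let x̄_p(β) = x̄_{p,β}(x̲_p(β)). Then for all β₁ < β₂ in (0,1): x̲_p(β₁) < x̲_p(β₂) and x̄_p(β₁) > x̄_p(β₂). -/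
/-!
Put `J(u) = ∫_u^{x̄(u)} (G(x̄(u)) - G(x)) dx`, so that
`H_β(u) = (p/(1-p)) ∫_{-∞}^u G - (β/(1-β)) J(u) - (μ₀ - u)`. As `G` increases, `x̄` decreases and
`u < x̄(u)` for `u < s`, the gap `J` is positive and decreasing on `(-∞, s)`. Hence on `(-∞, s)`
each `H_β` is increasing in `u` and `H_β(u)` is strictly decreasing in `β`, so
`H_{β₂}(x̲(β₁)) < H_{β₁}(x̲(β₁)) = 0 = H_{β₂}(x̲(β₂))` forces `x̲(β₁) < x̲(β₂)`; the decreasing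
map `x̄` reverses this order.
-/

open MeasureTheory Set

section IntegralUpperSub

variable {F : ℝ → ℝ} {u v a b : ℝ}

theorem integral_upper_sub_pos (hF : StrictMono F) (hua : u < a) :
    0 < ∫ x in u..a, (F a - F x) :=
  intervalIntegral.intervalIntegral_pos_of_pos_on
    (intervalIntegrable_const.sub hF.monotone.intervalIntegrable)
    (fun _ hx => sub_pos.2 (hF hx.2)) hua

theorem integral_upper_sub_le_of_le_left (hF : Monotone F) (huv : u ≤ v) (hva : v ≤ a) :
    ∫ x in v..a, (F a - F x) ≤ ∫ x in u..a, (F a - F x) := by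
  have hint : ∀ c d, IntervalIntegrable (fun x => F a - F x) volume c d := fun _ _ =>
    intervalIntegrable_const.sub hF.intervalIntegrable
  rw [← intervalIntegral.integral_add_adjacent_intervals (hint u v) (hint v a)]
  have hnonneg : 0 ≤ ∫ x in u..v, (F a - F x) :=
    intervalIntegral.integral_nonneg huv fun _ hx => sub_nonneg.2 (hF (hx.2.trans hva))
  linarith

theorem integral_upper_sub_le_of_le_right (hF : Monotone F) (hub : u ≤ b) (hba : b ≤ a) :
    ∫ x in u..b, (F b - F x) ≤ ∫ x in u..a, (F a - F x) := by
  have hint : ∀ c d e, IntervalIntegrable (fun x => F c - F x) volume d e := fun _ _ _ =>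
    intervalIntegrable_const.sub hF.intervalIntegrable
  rw [← intervalIntegral.integral_add_adjacent_intervals (hint a u b) (hint a b a)]
  have hshift : ∫ x in u..b, (F a - F x) =
      (∫ x in u..b, (F b - F x)) + (b - u) * (F a - F b) := by
    rw [← smul_eq_mul, ← intervalIntegral.integral_const,
      ← intervalIntegral.integral_add (hint b u b) intervalIntegrable_const]
    congr 1 with x
    ring
  have hnonneg : 0 ≤ ∫ x in b..a, (F a - F x) :=
    intervalIntegral.integral_nonneg hba fun _ hx => sub_nonneg.2 (hF hx.2)
  have hgap : 0 ≤ (b - u) * (F a - F b) := mul_nonneg (sub_nonneg.2 hub) (sub_nonneg.2 (hF hba))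
  linarith

end IntegralUpperSub

theorem strictMono_setIntegral_Iic_of_pos {g : ℝ → ℝ} (hg : Integrable g) (hpos : ∀ x, 0 < g x) :
    StrictMono fun x => ∫ t in Iic x, g t := by
  intro x y hxy
  rw [← sub_pos, intervalIntegral.integral_Iic_sub_Iic hg.integrableOn hg.integrableOn]
  exact intervalIntegral.intervalIntegral_pos_of_pos_on hg.intervalIntegrable
    (fun t _ => hpos t) hxy

theorem monotone_setIntegral_Iic_s17 {G : ℝ → ℝ} (hGint : ∀ a, IntegrableOn G (Iic a))
    (hGnn : ∀ x, 0 ≤ G x) : Monotone fun u => ∫ x in Iic u, G x :=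
  fun _ v huv => setIntegral_mono_set (hGint v) (Filter.Eventually.of_forall hGnn)
    (Iic_subset_Iic.2 huv).eventuallyLE

theorem antitoneOn_integral_upper_sub_comp {F φ : ℝ → ℝ} {S : Set ℝ} (hF : Monotone F)
    (hφ : Antitone φ) (hle : ∀ u ∈ S, u ≤ φ u) :
    AntitoneOn (fun u => ∫ x in u..φ u, (F (φ u) - F x)) S := by
  intro u _ v hv huv
  have hφuv : φ v ≤ φ u := hφ huv
  exact (integral_upper_sub_le_of_le_right hF (hle v hv) hφuv).trans
    (integral_upper_sub_le_of_le_left hF huv ((hle v hv).trans hφuv))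

theorem strictAnti_two_mul_sub_mul_div {p s : ℝ} (hp : p ∈ Ioo (-1 : ℝ) 1) :
    StrictAnti fun u => (2 * s - (1 - p) * u) / (1 + p) := by
  obtain ⟨hp₀, hp₁⟩ := hp
  intro u v huv
  dsimp only
  gcongr
  linarith

theorem lt_two_mul_sub_mul_div {p s u : ℝ} (hp : -1 < p) (hus : u < s) :
    u < (2 * s - (1 - p) * u) / (1 + p) := by
  rw [lt_div_iff₀ (by linarith)]
  linarith

theorem strictMono_div_one_sub : StrictMonoOn (fun β : ℝ => β / (1 - β)) (Iio 1) := by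
  intro β₁ hβ₁ β₂ hβ₂ hββ
  simp only [mem_Iio] at hβ₁ hβ₂
  dsimp only
  rw [div_lt_div_iff₀ (by linarith) (by linarith)]
  nlinarith

theorem lt_of_eq_zero_of_eq_zero_of_lt {K J : ℝ → ℝ} {s c μ₀ β₁ β₂ x₁ x₂ : ℝ} (hc : 0 ≤ c)
    (hK : Monotone K) (hJ : AntitoneOn J (Iio s)) (hJ_pos : ∀ u < s, 0 < J u)
    (hβ₂ : β₂ ∈ Ioo (0 : ℝ) 1) (hββ : β₁ < β₂) (hx₁ : x₁ < s)
    (h₁ : c * K x₁ - β₁ / (1 - β₁) * J x₁ - (μ₀ - x₁) = 0)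
    (h₂ : c * K x₂ - β₂ / (1 - β₂) * J x₂ - (μ₀ - x₂) = 0) :
    x₁ < x₂ := by
  by_contra! hle
  have hratio : β₁ / (1 - β₁) < β₂ / (1 - β₂) :=
    strictMono_div_one_sub (mem_Iio.2 (hββ.trans hβ₂.2)) (mem_Iio.2 hβ₂.2) hββ
  have hβ₂_coef : 0 ≤ β₂ / (1 - β₂) := div_nonneg hβ₂.1.le (by linarith [hβ₂.2])
  have hK_le := mul_le_mul_of_nonneg_left (hK hle) hc
  have hJ_le := mul_le_mul_of_nonneg_left (hJ (hle.trans_lt hx₁) hx₁ hle) hβ₂_coef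
  nlinarith [mul_lt_mul_of_pos_right hratio (hJ_pos x₁ hx₁)]

theorem stmt_17_general (g : ℝ → ℝ) (hg_pos : ∀ x, 0 < g x)
    (hg_one : (∫ x, g x) = 1)
    (μ₀ : ℝ)
    (G : ℝ → ℝ) (hG : ∀ x, G x = ∫ t in Iic x, g t)
    (hGint : ∀ a : ℝ, IntegrableOn G (Set.Iic a))
    (p : ℝ) (hp : p ∈ Set.Ioo (0 : ℝ) 1)
    (s : ℝ)
    (xbarp : ℝ → ℝ) (hxbarp : ∀ u, xbarp u = (2 * s - (1 - p) * u) / (1 + p))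
    (H : ℝ → ℝ → ℝ)
    (hH : ∀ β u, H β u = β / (1 - β) * (∫ x in u..(xbarp u), (G x - G (xbarp u)))
      + p / (1 - p) * (∫ x in Set.Iic u, G x) - (μ₀ - u))
    (β₁ β₂ : ℝ) (hβ₂ : β₂ ∈ Set.Ioo (0 : ℝ) 1)
    (hββ : β₁ < β₂)
    (xl₁ xl₂ : ℝ) (hxl₁ : xl₁ ∈ Set.Iio s)
    (hz₁ : H β₁ xl₁ = 0) (hz₂ : H β₂ xl₂ = 0) :
    xl₁ < xl₂ ∧ xbarp xl₂ < xbarp xl₁ := by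
  obtain ⟨hp₀, hp₁⟩ := hp
  have hG_mono : StrictMono G := by
    rw [show G = fun x => ∫ t in Iic x, g t from funext hG]
    exact strictMono_setIntegral_Iic_of_pos (.of_integral_ne_zero (by simp [hg_one])) hg_pos
  have hK_mono : Monotone fun u => ∫ x in Iic u, G x :=
    monotone_setIntegral_Iic_s17 hGint fun x =>
      hG x ▸ setIntegral_nonneg measurableSet_Iic fun t _ => (hg_pos t).le
  have hxbarp_anti : StrictAnti xbarp :=
    funext hxbarp ▸ strictAnti_two_mul_sub_mul_div ⟨by linarith, hp₁⟩
  have hlt_xbarp : ∀ u < s, u < xbarp u := fun u hus =>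
    hxbarp u ▸ lt_two_mul_sub_mul_div (by linarith) hus
  have hH_eq : ∀ β u, H β u = p / (1 - p) * (∫ x in Iic u, G x)
      - β / (1 - β) * (∫ x in u..xbarp u, (G (xbarp u) - G x)) - (μ₀ - u) := by
    intro β u
    simp only [hH, ← neg_sub (G (xbarp u)), intervalIntegral.integral_neg]
    ring
  have hlt : xl₁ < xl₂ :=
    lt_of_eq_zero_of_eq_zero_of_lt (div_nonneg hp₀.le (by linarith)) hK_mono
      (antitoneOn_integral_upper_sub_comp hG_mono.monotone hxbarp_anti.antitone
        fun u hu => (hlt_xbarp u hu).le)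
      (fun u hu => integral_upper_sub_pos hG_mono (hlt_xbarp u hu)) hβ₂ hββ hxl₁
      (hH_eq β₁ xl₁ ▸ hz₁) (hH_eq β₂ xl₂ ▸ hz₂)
  exact ⟨hlt, hxbarp_anti hlt⟩

/-- Part 2 of Corollary 2 (extension, case `r < r̄`): the equilibrium thresholds satisfy
`∂x̲_p/∂β > 0` and `∂x̄_p/∂β < 0`, i.e. the elaborateness of reports increases with the
investor's competence `β`. -/
theorem stmt_17 (g : ℝ → ℝ) (hg_cont : Continuous g) (hg_pos : ∀ x, 0 < g x)
    (hg_one : (∫ x, g x) = 1)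
    (hxg_int : Integrable (fun x => x * g x))
    (μ₀ : ℝ) (hμ₀ : μ₀ = ∫ x, x * g x) (hμ₀pos : 0 < μ₀)
    (G : ℝ → ℝ) (hG : ∀ x, G x = ∫ t in Iic x, g t)
    (hGint : ∀ a : ℝ, IntegrableOn G (Set.Iic a))
    (p : ℝ) (hp : p ∈ Set.Ioo (0 : ℝ) 1)
    (s : ℝ)
    (hVpos : p / (1 - p) * (∫ x in Set.Iic s, G x) + s - μ₀ > 0)
    (xbarp : ℝ → ℝ) (hxbarp : ∀ u, xbarp u = (2 * s - (1 - p) * u) / (1 + p))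
    (H : ℝ → ℝ → ℝ)
    (hH : ∀ β u, H β u = β / (1 - β) * (∫ x in u..(xbarp u), (G x - G (xbarp u)))
      + p / (1 - p) * (∫ x in Set.Iic u, G x) - (μ₀ - u))
    (β₁ β₂ : ℝ) (hβ₁ : β₁ ∈ Set.Ioo (0 : ℝ) 1) (hβ₂ : β₂ ∈ Set.Ioo (0 : ℝ) 1)
    (hββ : β₁ < β₂)
    (xl₁ xl₂ : ℝ) (hxl₁ : xl₁ ∈ Set.Iio s) (hxl₂ : xl₂ ∈ Set.Iio s)
    (hz₁ : H β₁ xl₁ = 0) (hz₂ : H β₂ xl₂ = 0) :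
    xl₁ < xl₂ ∧ xbarp xl₂ < xbarp xl₁ :=
  stmt_17_general g hg_pos hg_one μ₀ G hG hGint p hp s xbarp hxbarp H hH β₁ β₂ hβ₂ hββ xl₁ xl₂ hxl₁
    hz₁ hz₂
end
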